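/- arXiv:2012.08244 — 4 statements merged into one kernel-verified Lean document; each statement's English description precedes it below -/
import Mathlib

section
/- Let P and Q be probability measures on a measurable space X and let f : X → ℝ be measurable with finite second moments under both P and Q. Then E_P[f] − E_Q[f] ≤ sqrt((E_P[f²] + E_Q[f²]) · ‖P − Q‖_TV), where ‖P − Q‖_TV denotes the total variation distance. -/
open MeasureTheory

/-- Total variation distance with the convention `∫ |dP - dQ|`. -/
noncomputable def tvDist {X : Type*} [MeasurableSpace X]
    (P Q : Measure X) [IsFiniteMeasure P] [IsFiniteMeasure Q] : ℝ :=
  ((P.toSignedMeasure - Q.toSignedMeasure).totalVariation Set.univ).toReal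

section Aux

variable {X : Type*} [MeasurableSpace X]

lemma aux_key (P Q : Measure X) [IsFiniteMeasure P] [IsFiniteMeasure Q] :
    P + (P.toSignedMeasure - Q.toSignedMeasure).toJordanDecomposition.negPart
      = Q + (P.toSignedMeasure - Q.toSignedMeasure).toJordanDecomposition.posPart := by
  set s := P.toSignedMeasure - Q.toSignedMeasure with hs
  set j := s.toJordanDecomposition with hj
  ext A hA
  have h1 : s A = (P A).toReal - (Q A).toReal := Measure.toSignedMeasure_sub_apply hA
  have h2 : s A = (j.posPart A).toReal - (j.negPart A).toReal := by
    conv_lhs => rw [← s.toSignedMeasure_toJordanDecomposition]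
    exact Measure.toSignedMeasure_sub_apply hA
  rw [Measure.add_apply, Measure.add_apply]
  rw [← ENNReal.toReal_eq_toReal_iff' (by finiteness) (by finiteness)]
  rw [ENNReal.toReal_add (by finiteness) (by finiteness),
      ENNReal.toReal_add (by finiteness) (by finiteness)]
  linarith [h1, h2]

lemma aux_tv_le (P Q : Measure X) [IsFiniteMeasure P] [IsFiniteMeasure Q] :
    (P.toSignedMeasure - Q.toSignedMeasure).totalVariation ≤ P + Q := by
  set s := P.toSignedMeasure - Q.toSignedMeasure with hs
  set j := s.toJordanDecomposition with hj
  have hkey := aux_key P Q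
  have hms := j.mutuallySingular
  obtain ⟨u, hu, hupos, huneg⟩ := hms
  rw [Measure.le_iff]
  intro A hA
  have hpos : j.posPart A ≤ P A := by
    have h1 : j.posPart A = j.posPart (A ∩ uᶜ) := by
      have : j.posPart (A ∩ u) = 0 :=
        measure_mono_null Set.inter_subset_right hupos
      calc j.posPart A = j.posPart (A ∩ u) + j.posPart (A ∩ uᶜ) := by
            rw [← measure_inter_add_diff A hu]; rfl
        _ = j.posPart (A ∩ uᶜ) := by rw [this, zero_add]
    have h2 : j.negPart (A ∩ uᶜ) = 0 :=
      measure_mono_null Set.inter_subset_right huneg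
    have h3' : P (A ∩ uᶜ) + j.negPart (A ∩ uᶜ) = Q (A ∩ uᶜ) + j.posPart (A ∩ uᶜ) := by
      have := congrArg (fun (μ : Measure X) => μ (A ∩ uᶜ)) hkey
      simpa only [Measure.add_apply] using this
    rw [h2, add_zero] at h3'
    calc j.posPart A = j.posPart (A ∩ uᶜ) := h1
      _ ≤ Q (A ∩ uᶜ) + j.posPart (A ∩ uᶜ) := le_add_self
      _ = P (A ∩ uᶜ) := h3'.symm
      _ ≤ P A := measure_mono Set.inter_subset_left
  have hneg : j.negPart A ≤ Q A := by
    have h1 : j.negPart A = j.negPart (A ∩ u) := by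
      have : j.negPart (A ∩ uᶜ) = 0 :=
        measure_mono_null Set.inter_subset_right huneg
      calc j.negPart A = j.negPart (A ∩ u) + j.negPart (A ∩ uᶜ) := by
            rw [← measure_inter_add_diff A hu]; rfl
        _ = j.negPart (A ∩ u) := by rw [this, add_zero]
    have h2 : j.posPart (A ∩ u) = 0 :=
      measure_mono_null Set.inter_subset_right hupos
    have h3' : P (A ∩ u) + j.negPart (A ∩ u) = Q (A ∩ u) + j.posPart (A ∩ u) := by
      have := congrArg (fun (μ : Measure X) => μ (A ∩ u)) hkey
      simpa only [Measure.add_apply] using this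
    rw [h2, add_zero] at h3'
    calc j.negPart A = j.negPart (A ∩ u) := h1
      _ ≤ P (A ∩ u) + j.negPart (A ∩ u) := le_add_self
      _ = Q (A ∩ u) := h3'
      _ ≤ Q A := measure_mono Set.inter_subset_left
  calc s.totalVariation A = j.posPart A + j.negPart A := rfl
    _ ≤ P A + Q A := add_le_add hpos hneg
    _ = (P + Q) A := (Measure.add_apply P Q A).symm

lemma aux_int_f (ν : Measure X) [IsFiniteMeasure ν] (f : X → ℝ) (hf : Measurable f)
    (h2 : Integrable (fun x => f x ^ 2) ν) : Integrable f ν := by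
  refine (h2.add (integrable_const 1)).mono' hf.aestronglyMeasurable
    (ae_of_all _ fun x => ?_)
  have h1 : |f x| ≤ f x ^ 2 + 1 := by nlinarith [sq_abs (f x), sq_nonneg (|f x| - 1)]
  have h2' : (0:ℝ) ≤ f x ^ 2 + 1 := by positivity
  simpa [Real.norm_eq_abs, abs_of_nonneg h2'] using h1

lemma aux_cs (ν : Measure X) [IsFiniteMeasure ν] (f : X → ℝ) (hf : Measurable f)
    (h2 : Integrable (fun x => f x ^ 2) ν) :
    ∫ x, |f x| ∂ν ≤ Real.sqrt ((∫ x, f x ^ 2 ∂ν) * (ν Set.univ).toReal) := by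
  set A := (ν Set.univ).toReal with hA
  set B := ∫ x, f x ^ 2 ∂ν with hB
  have hAnn : 0 ≤ A := ENNReal.toReal_nonneg
  have hBnn : 0 ≤ B := integral_nonneg fun x => sq_nonneg _
  have habs : Integrable (fun x => |f x|) ν := (aux_int_f ν f hf h2).abs
  rcases eq_or_lt_of_le hAnn with hA0 | hApos
  · have huniv : ν Set.univ = 0 := by
      rcases (ENNReal.toReal_eq_zero_iff _).mp hA0.symm with h | h
      · exact h
      · exact absurd h (measure_lt_top ν Set.univ).ne
    have hν : ν = 0 := by simpa using huniv
    simp [hν, Real.sqrt_nonneg]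
  rcases eq_or_lt_of_le hBnn with hB0 | hBpos
  · have hzero : (fun x => f x ^ 2) =ᵐ[ν] 0 := by
      rw [← integral_eq_zero_iff_of_nonneg (fun x => sq_nonneg _) h2]
      exact hB0.symm
    have : ∫ x, |f x| ∂ν = 0 := by
      rw [integral_eq_zero_iff_of_nonneg (fun x => abs_nonneg _) habs]
      filter_upwards [hzero] with x hx
      have hx2 : f x ^ 2 = 0 := hx
      have : f x = 0 := by nlinarith
      simp [this]
    rw [this]
    exact Real.sqrt_nonneg _
  set t := Real.sqrt (B / A) with ht
  have htpos : 0 < t := Real.sqrt_pos.mpr (div_pos hBpos hApos)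
  have step : ∫ x, |f x| ∂ν ≤ ∫ x, (f x ^ 2 / (2 * t) + t / 2) ∂ν := by
    refine integral_mono habs ((h2.div_const _).add (integrable_const _)) fun x => ?_
    have h := sq_nonneg (|f x| - t)
    rw [sub_sq] at h
    have h' : 2 * t * |f x| ≤ f x ^ 2 + t ^ 2 := by nlinarith [sq_abs (f x)]
    rw [div_add' _ _ _ (by positivity), le_div_iff₀ (by positivity)]
    nlinarith
  have rhs : ∫ x, (f x ^ 2 / (2 * t) + t / 2) ∂ν = B / (2 * t) + t / 2 * A := by
    rw [integral_add (h2.div_const _) (integrable_const _), integral_div, integral_const]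
    simp [smul_eq_mul, mul_comm, hA, hB, Measure.real]
  have teq : t = Real.sqrt B / Real.sqrt A := by rw [ht, Real.sqrt_div hBnn]
  have hsA := Real.mul_self_sqrt hAnn
  have hsB := Real.mul_self_sqrt hBnn
  have hA' : 0 < Real.sqrt A := Real.sqrt_pos.mpr hApos
  have hB' : 0 < Real.sqrt B := Real.sqrt_pos.mpr hBpos
  have final : B / (2 * t) + t / 2 * A = Real.sqrt (B * A) := by
    rw [Real.sqrt_mul hBnn, teq]
    field_simp
    nlinarith [hsA, hsB, hA'.le, hB'.le]
  calc ∫ x, |f x| ∂ν ≤ B / (2 * t) + t / 2 * A := step.trans rhs.le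
    _ = Real.sqrt (B * A) := final

end Aux

theorem stmt0 {X : Type*} [MeasurableSpace X]
    (P Q : Measure X) [IsProbabilityMeasure P] [IsProbabilityMeasure Q]
    (f : X → ℝ) (hf : Measurable f)
    (hP2 : Integrable (fun x => (f x) ^ 2) P)
    (hQ2 : Integrable (fun x => (f x) ^ 2) Q) :
    ∫ x, f x ∂P - ∫ x, f x ∂Q ≤
      Real.sqrt ((∫ x, (f x) ^ 2 ∂P + ∫ x, (f x) ^ 2 ∂Q) * tvDist P Q) := by
  set s := P.toSignedMeasure - Q.toSignedMeasure with hs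
  set j := s.toJordanDecomposition with hj
  set ν := s.totalVariation with hν
  haveI : IsFiniteMeasure ν := by rw [hν, SignedMeasure.totalVariation]; infer_instance
  have hνle : ν ≤ P + Q := aux_tv_le P Q
  have hposle : j.posPart ≤ ν := Measure.le_add_right le_rfl
  have hnegle : j.negPart ≤ ν := Measure.le_add_left le_rfl
  have hPQ2 : Integrable (fun x => f x ^ 2) (P + Q) := hP2.add_measure hQ2
  have hν2 : Integrable (fun x => f x ^ 2) ν := hPQ2.mono_measure hνle
  have hpos2 : Integrable (fun x => f x ^ 2) j.posPart := hν2.mono_measure hposle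
  have hneg2 : Integrable (fun x => f x ^ 2) j.negPart := hν2.mono_measure hnegle
  have hfP : Integrable f P := aux_int_f P f hf hP2
  have hfQ : Integrable f Q := aux_int_f Q f hf hQ2
  have hfpos : Integrable f j.posPart := aux_int_f _ f hf hpos2
  have hfneg : Integrable f j.negPart := aux_int_f _ f hf hneg2
  -- integral identity
  have hkey := aux_key P Q
  have hint : ∫ x, f x ∂P + ∫ x, f x ∂j.negPart
      = ∫ x, f x ∂Q + ∫ x, f x ∂j.posPart := by
    rw [← integral_add_measure hfP hfneg, ← integral_add_measure hfQ hfpos, hkey]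
  have hdiff : ∫ x, f x ∂P - ∫ x, f x ∂Q
      = ∫ x, f x ∂j.posPart - ∫ x, f x ∂j.negPart := by linarith
  have habsν : ∫ x, |f x| ∂ν = ∫ x, |f x| ∂j.posPart + ∫ x, |f x| ∂j.negPart :=
    integral_add_measure hfpos.abs hfneg.abs
  have hbound : ∫ x, f x ∂P - ∫ x, f x ∂Q ≤ ∫ x, |f x| ∂ν := by
    rw [hdiff, habsν]
    have h1 : ∫ x, f x ∂j.posPart ≤ ∫ x, |f x| ∂j.posPart :=
      integral_mono hfpos hfpos.abs fun x => le_abs_self _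
    have h2 : -∫ x, f x ∂j.negPart ≤ ∫ x, |f x| ∂j.negPart := by
      rw [← integral_neg]
      exact integral_mono hfneg.neg hfneg.abs fun x => neg_le_abs _
    linarith
  have hcs := aux_cs ν f hf hν2
  have hB : ∫ x, f x ^ 2 ∂ν ≤ ∫ x, f x ^ 2 ∂P + ∫ x, f x ^ 2 ∂Q := by
    have := integral_mono_measure hνle (ae_of_all _ fun x => sq_nonneg (f x)) hPQ2
    rwa [integral_add_measure hP2 hQ2] at this
  have hνnn : (0:ℝ) ≤ (ν Set.univ).toReal := ENNReal.toReal_nonneg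
  have htv : tvDist P Q = (ν Set.univ).toReal := rfl
  refine hbound.trans (hcs.trans ?_)
  rw [htv]
  exact Real.sqrt_le_sqrt (mul_le_mul_of_nonneg_right hB hνnn)
end

section
/- Let P_t and π be probability distributions on a compact set M* ⊆ B(0, R) ⊂ ℝ^D, and let ε be an independent centered sub-Gaussian random vector with parameter σ_t². Let Ỹ have law P_t * Law(ε) or π * Law(ε) (convolutions). Then for any compact set M ⊆ B(0, R), |E_{P_t*ε} d²(Y, M) − E_{π*ε} d²(Y, M)| ≤ (128 σ_t² D + 16 R²) ‖P_t − π‖_TV^{1/2}. -/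
open MeasureTheory Metric
open scoped NNReal ENNReal RealInnerProductSpace

variable {X : Type*} [MeasurableSpace X] (P π : Measure X)
  [IsProbabilityMeasure P] [IsProbabilityMeasure π]

lemma jordan_parts :
    (P.toSignedMeasure - π.toSignedMeasure).toJordanDecomposition.posPart ≤ P ∧
    (P.toSignedMeasure - π.toSignedMeasure).toJordanDecomposition.negPart ≤ π ∧
    P + (P.toSignedMeasure - π.toSignedMeasure).toJordanDecomposition.negPart
      = π + (P.toSignedMeasure - π.toSignedMeasure).toJordanDecomposition.posPart := by
  set ξ := P.toSignedMeasure - π.toSignedMeasure with hξ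
  obtain ⟨i, hi₁, hi₂, hi₃, hpos, hneg⟩ := ξ.toJordanDecomposition_spec
  have hξapp : ∀ s : Set X, MeasurableSet s → ξ s = (P s).toReal - (π s).toReal := by
    intro s hs
    rw [hξ, VectorMeasure.sub_apply, Measure.toSignedMeasure_apply_measurable hs,
      Measure.toSignedMeasure_apply_measurable hs]
    rfl
  have key : ∀ (μ : Measure X), IsFiniteMeasure μ → ∀ s : Set X, MeasurableSet s →
      ∀ (r : ℝ) (hr : 0 ≤ r), r ≤ (μ s).toReal →
      (((↑) : ℝ≥0 → ℝ≥0∞) ⟨r, hr⟩) ≤ μ s := by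
    intro μ hμ s hs r hr hle
    calc (((↑) : ℝ≥0 → ℝ≥0∞) ⟨r, hr⟩) ≤ ((μ s).toNNReal : ENNReal) := by
          exact ENNReal.coe_le_coe.2 (NNReal.coe_le_coe.1 (show r ≤ ((μ s).toNNReal : ℝ) from hle))
      _ = μ s := ENNReal.coe_toNNReal (measure_ne_top _ _)
  have hposle : ξ.toJordanDecomposition.posPart ≤ P := by
    rw [Measure.le_iff]
    intro s hs
    rw [hpos, SignedMeasure.toMeasureOfZeroLE_apply _ hi₂ hi₁ hs]
    refine le_trans (key P inferInstance (i ∩ s) (hi₁.inter hs) _ _ ?_)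
      (measure_mono Set.inter_subset_right)
    rw [hξapp _ (hi₁.inter hs)]
    have := ENNReal.toReal_nonneg (a := π (i ∩ s))
    linarith
  have hnegle : ξ.toJordanDecomposition.negPart ≤ π := by
    rw [Measure.le_iff]
    intro s hs
    rw [hneg, SignedMeasure.toMeasureOfLEZero_apply _ hi₃ hi₁.compl hs]
    refine le_trans (key π inferInstance (iᶜ ∩ s) (hi₁.compl.inter hs) _ _ ?_)
      (measure_mono Set.inter_subset_right)
    rw [hξapp _ (hi₁.compl.inter hs)]
    have := ENNReal.toReal_nonneg (a := P (iᶜ ∩ s))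
    linarith
  refine ⟨hposle, hnegle, ?_⟩
  ext s hs
  simp only [Measure.add_apply]
  rw [hpos, hneg, SignedMeasure.toMeasureOfZeroLE_apply _ hi₂ hi₁ hs,
    SignedMeasure.toMeasureOfLEZero_apply _ hi₃ hi₁.compl hs]
  have hsplit : ξ (i ∩ s) + ξ (iᶜ ∩ s) = ξ s := by
    rw [← VectorMeasure.of_union ((disjoint_compl_right : Disjoint i iᶜ).mono
      Set.inter_subset_left Set.inter_subset_left) (hi₁.inter hs) (hi₁.compl.inter hs)]
    congr 1
    rw [← Set.union_inter_distrib_right, Set.union_compl_self, Set.univ_inter]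
  have h1 := hξapp s hs
  have hPfin := measure_ne_top P s
  have hπfin := measure_ne_top π s
  -- convert to real equality
  rw [← ENNReal.toReal_eq_toReal_iff' (by finiteness) (by finiteness)]
  rw [ENNReal.toReal_add hPfin (by finiteness), ENNReal.toReal_add hπfin (by finiteness)]
  simp only [ENNReal.coe_toReal, NNReal.coe_mk]
  linarith

lemma tvDist_nonneg : 0 ≤ tvDist P π := ENNReal.toReal_nonneg

lemma tvDist_le_two : tvDist P π ≤ 2 := by
  obtain ⟨h1, h2, -⟩ := jordan_parts P π
  rw [tvDist, SignedMeasure.totalVariation, Measure.add_apply]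
  have e1 : (P.toSignedMeasure - π.toSignedMeasure).toJordanDecomposition.posPart Set.univ ≤ 1 := by
    calc _ ≤ P Set.univ := h1 Set.univ
      _ = 1 := measure_univ
  have e2 : (P.toSignedMeasure - π.toSignedMeasure).toJordanDecomposition.negPart Set.univ ≤ 1 := by
    calc _ ≤ π Set.univ := h2 Set.univ
      _ = 1 := measure_univ
  have : ((P.toSignedMeasure - π.toSignedMeasure).toJordanDecomposition.posPart Set.univ +
      (P.toSignedMeasure - π.toSignedMeasure).toJordanDecomposition.negPart Set.univ) ≤ (2 : ℝ≥0∞) := by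
    calc _ ≤ (1 : ℝ≥0∞) + 1 := add_le_add e1 e2
      _ = 2 := by norm_num
  calc _ ≤ ((2 : ℝ≥0∞)).toReal := ENNReal.toReal_mono (by norm_num) this
    _ = 2 := by norm_num

lemma abs_integral_sub_le_tv {h : X → ℝ} (hm : StronglyMeasurable h) {C : ℝ}
    (hbP : ∀ᵐ x ∂P, |h x| ≤ C) (hbπ : ∀ᵐ x ∂π, |h x| ≤ C) :
    |(∫ x, h x ∂P) - ∫ x, h x ∂π| ≤ C * tvDist P π := by
  obtain ⟨h1, h2, h3⟩ := jordan_parts P π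
  set pos := (P.toSignedMeasure - π.toSignedMeasure).toJordanDecomposition.posPart with hposdef
  set neg := (P.toSignedMeasure - π.toSignedMeasure).toJordanDecomposition.negPart with hnegdef
  have hC : 0 ≤ C := by
    obtain ⟨x, hx⟩ : ∃ x, |h x| ≤ C := by
      by_contra hc
      push_neg at hc
      have h0 : ∀ᵐ x ∂P, ¬ (|h x| ≤ C) :=
        Filter.Eventually.of_forall (fun x => not_le.2 (hc x))
      have hfalse : ∀ᵐ _x ∂P, False := by
        filter_upwards [hbP, h0] with x hx1 hx2; exact hx2 hx1
      rw [Filter.eventually_false_iff_eq_bot, MeasureTheory.ae_eq_bot] at hfalse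
      exact (IsProbabilityMeasure.ne_zero P) hfalse
    exact le_trans (abs_nonneg _) hx
  have hbpos : ∀ᵐ x ∂pos, |h x| ≤ C := ae_mono h1 hbP
  have hbneg : ∀ᵐ x ∂neg, |h x| ≤ C := ae_mono h2 hbπ
  have hintOf : ∀ (μ : Measure X), IsFiniteMeasure μ → (∀ᵐ x ∂μ, |h x| ≤ C) →
      Integrable h μ := by
    intro μ hμ hb
    exact (integrable_const C).mono' hm.aestronglyMeasurable
      (by filter_upwards [hb] with x hx; simpa using hx)
  have hiP : Integrable h P := hintOf P inferInstance hbP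
  have hiπ : Integrable h π := hintOf π inferInstance hbπ
  have hipos : Integrable h pos := hintOf pos inferInstance hbpos
  have hineg : Integrable h neg := hintOf neg inferInstance hbneg
  have key : (∫ x, h x ∂P) - ∫ x, h x ∂π = (∫ x, h x ∂pos) - ∫ x, h x ∂neg := by
    have := congrArg (fun μ : Measure X => ∫ x, h x ∂μ) h3
    simp only [integral_add_measure hiP hineg, integral_add_measure hiπ hipos] at this
    linarith
  have bnd : ∀ (μ : Measure X), IsFiniteMeasure μ → (∀ᵐ x ∂μ, |h x| ≤ C) →
      |∫ x, h x ∂μ| ≤ C * (μ Set.univ).toReal := by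
    intro μ hμ hb
    calc |∫ x, h x ∂μ| ≤ ∫ x, |h x| ∂μ := by
          simpa [Real.norm_eq_abs] using
            norm_integral_le_integral_norm (μ := μ) h
      _ ≤ ∫ _, C ∂μ := integral_mono_ae (hintOf μ hμ hb).abs (integrable_const C) hb
      _ = C * (μ Set.univ).toReal := by simp [mul_comm, Measure.real]
  have htv : tvDist P π = (pos Set.univ).toReal + (neg Set.univ).toReal := by
    rw [tvDist, SignedMeasure.totalVariation, Measure.add_apply,
      ENNReal.toReal_add (measure_ne_top _ _) (measure_ne_top _ _)]
  rw [key, htv]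
  calc |(∫ x, h x ∂pos) - ∫ x, h x ∂neg| ≤ |∫ x, h x ∂pos| + |∫ x, h x ∂neg| := abs_sub _ _
    _ ≤ C * (pos Set.univ).toReal + C * (neg Set.univ).toReal :=
        add_le_add (bnd pos inferInstance hbpos) (bnd neg inferInstance hbneg)
    _ = C * ((pos Set.univ).toReal + (neg Set.univ).toReal) := by ring

set_option maxHeartbeats 2000000 in
theorem stmt9 {D : ℕ} (R σ : ℝ) (Mstar M : Set (EuclideanSpace ℝ (Fin D)))
    (hMstarC : IsCompact Mstar) (hMstarR : Mstar ⊆ Metric.closedBall 0 R)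
    (hMne : M.Nonempty) (hMc : IsCompact M) (hMR : M ⊆ Metric.closedBall 0 R)
    (P π ν : Measure (EuclideanSpace ℝ (Fin D)))
    [IsProbabilityMeasure P] [IsProbabilityMeasure π] [IsProbabilityMeasure ν]
    (hP : P Mstarᶜ = 0) (hπ : π Mstarᶜ = 0)
    (hν0 : ∫ x, x ∂ν = 0)
    (hνsg : ∀ u : EuclideanSpace ℝ (Fin D), ‖u‖ = 1 → ∀ l : ℝ,
      ∫ x, Real.exp (l * (inner ℝ u x : ℝ)) ∂ν ≤ Real.exp (l ^ 2 * σ ^ 2 / 2)) :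
    |(∫ y, Metric.infDist y M ^ 2 ∂(P ∗ ν)) - ∫ y, Metric.infDist y M ^ 2 ∂(π ∗ ν)| ≤
      (128 * σ ^ 2 * D + 16 * R ^ 2) * Real.sqrt (tvDist P π) := by
  classical
  obtain ⟨p₀, hp₀⟩ := hMne
  have hball : ∀ q ∈ M, ‖q‖ ≤ R := by
    intro q hq
    simpa [Metric.mem_closedBall, dist_zero_right] using hMR hq
  have hstar : ∀ x ∈ Mstar, ‖x‖ ≤ R := by
    intro q hq
    simpa [Metric.mem_closedBall, dist_zero_right] using hMstarR hq
  have hR : 0 ≤ R := le_trans (norm_nonneg _) (hball p₀ hp₀)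
  set m : EuclideanSpace ℝ (Fin D) → ℝ := fun y => Metric.infDist y M ^ 2 with hmdef
  have hmc : Continuous m := (continuous_infDist_pt M).pow 2
  have hm0 : ∀ y, 0 ≤ m y := fun y => sq_nonneg _
  -- upper bound on m
  have hub : ∀ y : EuclideanSpace ℝ (Fin D), m y ≤ (‖y‖ + R) ^ 2 := by
    intro y
    have h1 : Metric.infDist y M ≤ ‖y‖ + R := by
      calc Metric.infDist y M ≤ dist y p₀ := Metric.infDist_le_dist_of_mem hp₀
        _ ≤ ‖y‖ + ‖p₀‖ := by rw [dist_eq_norm]; exact norm_sub_le _ _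
        _ ≤ ‖y‖ + R := by linarith [hball p₀ hp₀]
    have h0 := Metric.infDist_nonneg (s := M) (x := y)
    simp only [hmdef]
    nlinarith [norm_nonneg y]
  -- lower bound on ‖y‖ via infDist
  have hlb : ∀ y : EuclideanSpace ℝ (Fin D), ‖y‖ ≤ Metric.infDist y M + R := by
    intro y
    obtain ⟨q, hqM, hq⟩ := hMc.exists_infDist_eq_dist ⟨p₀, hp₀⟩ y
    calc ‖y‖ ≤ ‖y - q‖ + ‖q‖ := by
          simpa using norm_add_le (y - q) q
      _ ≤ Metric.infDist y M + R := by
          rw [hq, dist_eq_norm]; linarith [hball q hqM]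
  -- key geometric estimate
  have hkey : ∀ (x z : EuclideanSpace ℝ (Fin D)), ‖x‖ ≤ R → |m (x + z) - m z - 2 * ⟪x, z⟫| ≤ 3 * R ^ 2 := by
    intro x z hx
    rw [abs_le]
    constructor
    · -- m z ≤ m (x+z) - 2⟪x,z⟫ + 3R²
      obtain ⟨q, hqM, hq⟩ := hMc.exists_infDist_eq_dist ⟨p₀, hp₀⟩ (x + z)
      have h1 : m (x + z) = ‖(x + z) - q‖ ^ 2 := by
        rw [hmdef]; simp only; rw [hq, dist_eq_norm]
      have h2 : m z ≤ ‖z - q‖ ^ 2 := by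
        have := Metric.infDist_le_dist_of_mem (x := z) hqM
        rw [dist_eq_norm] at this
        have h0 := Metric.infDist_nonneg (s := M) (x := z)
        rw [hmdef]; simp only; nlinarith
      have h3 : z - q = ((x + z) - q) - x := by abel
      have h4 : ‖((x + z) - q) - x‖ ^ 2
          = ‖(x + z) - q‖ ^ 2 - 2 * ⟪(x + z) - q, x⟫ + ‖x‖ ^ 2 :=
        norm_sub_sq_real _ _
      have h5 : ⟪(x + z) - q, x⟫ = ⟪x, z⟫ + ‖x‖ ^ 2 - ⟪x, q⟫ := by
        rw [inner_sub_left, inner_add_left, real_inner_comm z x, real_inner_comm q x]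
        rw [real_inner_self_eq_norm_sq]
        ring
      have h6 : |⟪x, q⟫| ≤ R ^ 2 := by
        calc |⟪x, q⟫| ≤ ‖x‖ * ‖q‖ := abs_real_inner_le_norm _ _
          _ ≤ R * R := mul_le_mul hx (hball q hqM) (norm_nonneg _) hR
          _ = R ^ 2 := by ring
      have h7 := abs_le.mp h6
      have hx2 : ‖x‖ ^ 2 ≤ R ^ 2 := by nlinarith [norm_nonneg x]
      rw [h3, h4, h5] at h2
      nlinarith
    · -- m (x+z) ≤ m z + 2⟪x,z⟫ + 3R²
      obtain ⟨q, hqM, hq⟩ := hMc.exists_infDist_eq_dist ⟨p₀, hp₀⟩ z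
      have h1 : m z = ‖z - q‖ ^ 2 := by
        rw [hmdef]; simp only; rw [hq, dist_eq_norm]
      have h2 : m (x + z) ≤ ‖(x + z) - q‖ ^ 2 := by
        have := Metric.infDist_le_dist_of_mem (x := x + z) hqM
        rw [dist_eq_norm] at this
        have h0 := Metric.infDist_nonneg (s := M) (x := x + z)
        rw [hmdef]; simp only; nlinarith
      have h3 : (x + z) - q = x + (z - q) := by abel
      have h4 : ‖x + (z - q)‖ ^ 2 = ‖x‖ ^ 2 + 2 * ⟪x, z - q⟫ + ‖z - q‖ ^ 2 :=
        norm_add_sq_real _ _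
      have h5 : ⟪x, z - q⟫ = ⟪x, z⟫ - ⟪x, q⟫ := inner_sub_right _ _ _
      have h6 : |⟪x, q⟫| ≤ R ^ 2 := by
        calc |⟪x, q⟫| ≤ ‖x‖ * ‖q‖ := abs_real_inner_le_norm _ _
          _ ≤ R * R := mul_le_mul hx (hball q hqM) (norm_nonneg _) hR
          _ = R ^ 2 := by ring
      have h7 := abs_le.mp h6
      have hx2 : ‖x‖ ^ 2 ≤ R ^ 2 := by nlinarith [norm_nonneg x]
      rw [h3, h4, h5] at h2
      nlinarith
  -- convolution as map of product
  have hconv : ∀ (μ : Measure (EuclideanSpace ℝ (Fin D))),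
      μ ∗ ν = Measure.map (fun p : (EuclideanSpace ℝ (Fin D)) × (EuclideanSpace ℝ (Fin D)) =>
        p.1 + p.2) (μ.prod ν) := fun μ => rfl
  have haddmeas : Measurable (fun p : (EuclideanSpace ℝ (Fin D)) × (EuclideanSpace ℝ (Fin D)) =>
      p.1 + p.2) := measurable_fst.add measurable_snd
  by_cases hQ : Integrable (fun z : EuclideanSpace ℝ (Fin D) => ‖z‖ ^ 2) ν
  · -- main case
    have hprodInt : ∀ (μ : Measure (EuclideanSpace ℝ (Fin D))), IsProbabilityMeasure μ →
        μ Mstarᶜ = 0 →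
        Integrable (fun p : (EuclideanSpace ℝ (Fin D)) × (EuclideanSpace ℝ (Fin D)) =>
          m (p.1 + p.2)) (μ.prod ν) := by
      intro μ hμinst hμMs
      have hsnd : Integrable (fun p : (EuclideanSpace ℝ (Fin D)) × (EuclideanSpace ℝ (Fin D)) =>
          ‖p.2‖ ^ 2) (μ.prod ν) := by
        have hmap : (μ.prod ν).map Prod.snd = ν := by
          rw [Measure.map_snd_prod, measure_univ, one_smul]
        have h := hQ
        rw [← hmap] at h
        exact (integrable_map_measure (continuous_norm.pow 2).aestronglyMeasurable
          measurable_snd.aemeasurable).mp h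
      have haeprod : ∀ᵐ p ∂(μ.prod ν),
          (p : (EuclideanSpace ℝ (Fin D)) × (EuclideanSpace ℝ (Fin D))).1 ∈ Mstar := by
        rw [MeasureTheory.ae_iff]
        have heq : {p : (EuclideanSpace ℝ (Fin D)) × (EuclideanSpace ℝ (Fin D)) |
            ¬ p.1 ∈ Mstar} = Mstarᶜ ×ˢ (Set.univ) := by
          ext p; simp [Set.mem_prod]
        rw [heq, Measure.prod_prod, hμMs, zero_mul]
      refine ((hsnd.const_mul 2).add (integrable_const (8 * R ^ 2))).mono'
        (hmc.comp continuous_add).aestronglyMeasurable ?_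
      filter_upwards [haeprod] with p hp
      have hxR : ‖p.1‖ ≤ R := hstar _ hp
      have h1 := hub (p.1 + p.2)
      have h2 : ‖p.1 + p.2‖ ≤ ‖p.1‖ + ‖p.2‖ := norm_add_le _ _
      have h0 := hm0 (p.1 + p.2)
      have h3 := Metric.infDist_nonneg (s := M) (x := p.1 + p.2)
      rw [Real.norm_eq_abs, abs_of_nonneg h0]
      simp only [Pi.add_apply, hmdef] at *
      have h4 : ‖p.1 + p.2‖ + R ≤ ‖p.2‖ + 2 * R := by linarith
      have h5 : (‖p.1 + p.2‖ + R) ^ 2 ≤ (‖p.2‖ + 2 * R) ^ 2 := by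
        nlinarith [norm_nonneg (p.1 + p.2)]
      nlinarith [norm_nonneg p.2, sq_nonneg (‖p.2‖ - 2 * R)]
    have hconvint : ∀ (μ : Measure (EuclideanSpace ℝ (Fin D))), IsProbabilityMeasure μ →
        μ Mstarᶜ = 0 → ∫ y, m y ∂(μ ∗ ν) = ∫ x, ∫ z, m (x + z) ∂ν ∂μ := by
      intro μ hμinst hμMs
      rw [hconv μ, integral_map haddmeas.aemeasurable hmc.aestronglyMeasurable]
      exact integral_prod _ (hprodInt μ hμinst hμMs)
    set g : EuclideanSpace ℝ (Fin D) → ℝ := fun x => ∫ z, m (x + z) ∂ν with hgdef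
    set g0 : ℝ := ∫ z, m z ∂ν with hg0def
    have hgsm : StronglyMeasurable g := by
      have hsm : StronglyMeasurable (fun p : (EuclideanSpace ℝ (Fin D)) ×
          (EuclideanSpace ℝ (Fin D)) => m (p.1 + p.2)) :=
        (hmc.comp continuous_add).stronglyMeasurable
      exact hsm.integral_prod_right'
    set h : EuclideanSpace ℝ (Fin D) → ℝ := fun x => g x - g0 with hhdef
    have hhsm : StronglyMeasurable h := hgsm.sub stronglyMeasurable_const
    have hmz : Integrable m ν := by
      refine ((hQ.const_mul 2).add (integrable_const (2 * R ^ 2))).mono'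
        hmc.aestronglyMeasurable ?_
      refine Filter.Eventually.of_forall fun z => ?_
      have h1 := hub z
      have h0 := hm0 z
      rw [Real.norm_eq_abs, abs_of_nonneg h0]
      simp only [Pi.add_apply]
      nlinarith [norm_nonneg z, sq_nonneg (‖z‖ - R)]
    have hzint : Integrable (fun z : EuclideanSpace ℝ (Fin D) => z) ν := by
      refine (hQ.add (integrable_const 1)).mono' continuous_id.aestronglyMeasurable ?_
      refine Filter.Eventually.of_forall fun z => ?_
      simp only [Pi.add_apply]
      nlinarith [norm_nonneg z, sq_nonneg (‖z‖ - 1)]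
    have hinner : ∀ x : EuclideanSpace ℝ (Fin D), Integrable (fun z => 2 * ⟪x, z⟫) ν :=
      fun x => (hzint.const_inner x).const_mul 2
    have hphiint : ∀ x : EuclideanSpace ℝ (Fin D), ‖x‖ ≤ R →
        Integrable (fun z => m (x + z) - m z - 2 * ⟪x, z⟫) ν := by
      intro x hx
      refine (integrable_const (3 * R ^ 2)).mono' ?_ ?_
      · exact (((hmc.comp (continuous_const.add continuous_id)).sub hmc).sub
          (continuous_const.mul (continuous_const.inner continuous_id))).aestronglyMeasurable
      · exact Filter.Eventually.of_forall fun z => by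
          rw [Real.norm_eq_abs]; exact hkey x z hx
    have hheq : ∀ x : EuclideanSpace ℝ (Fin D), ‖x‖ ≤ R →
        h x = ∫ z, (m (x + z) - m z - 2 * ⟪x, z⟫) ∂ν := by
      intro x hx
      have i1 : Integrable (fun z => m z + 2 * ⟪x, z⟫) ν := by
        exact hmz.add (hinner x)
      have efun : (fun z : EuclideanSpace ℝ (Fin D) => m (x + z)) =
          (fun z => (m z + 2 * ⟪x, z⟫) + (m (x + z) - m z - 2 * ⟪x, z⟫)) := by
        funext z; ring
      have e : ∫ z, m (x + z) ∂ν = (∫ z, (m z + 2 * ⟪x, z⟫) ∂ν) +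
          ∫ z, (m (x + z) - m z - 2 * ⟪x, z⟫) ∂ν := by
        rw [efun]
        exact integral_add i1 (hphiint x hx)
      have e2 : ∫ z, (m z + 2 * ⟪x, z⟫) ∂ν = g0 := by
        rw [integral_add hmz (hinner x), hg0def]
        have e3 : ∫ z, 2 * ⟪x, z⟫ ∂ν = 2 * ⟪x, ∫ z, z ∂ν⟫ := by
          rw [integral_const_mul, integral_inner hzint x]
        rw [e3, hν0, inner_zero_right, mul_zero, add_zero]
      simp only [hhdef, hgdef]
      rw [e, e2]; ring
    have hbae : ∀ (μ : Measure (EuclideanSpace ℝ (Fin D))), μ Mstarᶜ = 0 →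
        ∀ᵐ x ∂μ, |h x| ≤ 3 * R ^ 2 := by
      intro μ hμMs
      have hMs : ∀ᵐ x ∂μ, x ∈ Mstar := by
        rw [MeasureTheory.ae_iff]; exact hμMs
      filter_upwards [hMs] with x hx
      rw [hheq x (hstar x hx)]
      calc |∫ z, (m (x + z) - m z - 2 * ⟪x, z⟫) ∂ν| ≤ ∫ _z, 3 * R ^ 2 ∂ν := by
            have := norm_integral_le_of_norm_le (μ := ν) (integrable_const (3 * R ^ 2))
              (Filter.Eventually.of_forall fun z => by
                rw [Real.norm_eq_abs]; exact hkey x z (hstar x hx))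
            simpa [Real.norm_eq_abs] using this
        _ = 3 * R ^ 2 := by simp
    have hgig : ∀ (μ : Measure (EuclideanSpace ℝ (Fin D))), IsProbabilityMeasure μ →
        μ Mstarᶜ = 0 → ∫ x, g x ∂μ = (∫ x, h x ∂μ) + g0 := by
      intro μ hμinst hμMs
      have hih : Integrable h μ := (integrable_const (3 * R ^ 2)).mono' hhsm.aestronglyMeasurable
        (by filter_upwards [hbae μ hμMs] with x hx; rwa [Real.norm_eq_abs])
      have e : ∫ x, g x ∂μ = ∫ x, (h x + g0) ∂μ := by
        congr 1; funext x; simp only [hhdef]; ring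
      rw [e, integral_add hih (integrable_const g0), integral_const, probReal_univ]
      simp
    have hihP : Integrable h P := (integrable_const (3 * R ^ 2)).mono' hhsm.aestronglyMeasurable
      (by filter_upwards [hbae P hP] with x hx; rwa [Real.norm_eq_abs])
    have hihπ : Integrable h π := (integrable_const (3 * R ^ 2)).mono' hhsm.aestronglyMeasurable
      (by filter_upwards [hbae π hπ] with x hx; rwa [Real.norm_eq_abs])
    have hfin : |(∫ y, m y ∂(P ∗ ν)) - ∫ y, m y ∂(π ∗ ν)| ≤ 3 * R ^ 2 * tvDist P π := by
      rw [hconvint P inferInstance hP, hconvint π inferInstance hπ]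
      have eg : (∫ x, (∫ z, m (x + z) ∂ν) ∂P) - ∫ x, (∫ z, m (x + z) ∂ν) ∂π
          = (∫ x, h x ∂P) - ∫ x, h x ∂π := by
        have e1 : ∫ x, (∫ z, m (x + z) ∂ν) ∂P = ∫ x, g x ∂P := rfl
        have e2 : ∫ x, (∫ z, m (x + z) ∂ν) ∂π = ∫ x, g x ∂π := rfl
        rw [e1, e2, hgig P inferInstance hP, hgig π inferInstance hπ]
        ring
      rw [eg]
      exact abs_integral_sub_le_tv P π hhsm (hbae P hP) (hbae π hπ)
    have ht0 := tvDist_nonneg P π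
    have ht2 := tvDist_le_two P π
    have hs : Real.sqrt (tvDist P π) ^ 2 = tvDist P π := Real.sq_sqrt ht0
    have hsn := Real.sqrt_nonneg (tvDist P π)
    have hsle2 : Real.sqrt (tvDist P π) ≤ 2 := by
      nlinarith
    have key1 : 0 ≤ R ^ 2 * (Real.sqrt (tvDist P π) * (2 - Real.sqrt (tvDist P π))) :=
      mul_nonneg (sq_nonneg R) (mul_nonneg hsn (by linarith))
    have key2 : 0 ≤ 128 * σ ^ 2 * (D : ℝ) * Real.sqrt (tvDist P π) := by positivity
    nlinarith [hfin, abs_nonneg ((∫ y, m y ∂(P ∗ ν)) - ∫ y, m y ∂(π ∗ ν))]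
  · -- degenerate case : both integrals are zero
    have hzero : ∀ (μ : Measure (EuclideanSpace ℝ (Fin D))), IsProbabilityMeasure μ →
        μ Mstarᶜ = 0 → ∫ y, m y ∂(μ ∗ ν) = 0 := by
      intro μ hμinst hμMs
      refine integral_undef ?_
      intro hInt
      apply hQ
      rw [hconv μ] at hInt
      have hprod : Integrable (fun p : (EuclideanSpace ℝ (Fin D)) × (EuclideanSpace ℝ (Fin D)) =>
          m (p.1 + p.2)) (μ.prod ν) := by
        have := (integrable_map_measure hmc.aestronglyMeasurable haddmeas.aemeasurable).mp hInt
        exact this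
      have hae : ∀ᵐ x ∂μ, Integrable (fun z => m (x + z)) ν := hprod.prod_right_ae
      have hMs : ∀ᵐ x ∂μ, x ∈ Mstar := by
        rw [MeasureTheory.ae_iff]
        exact hμMs
      have hne : (MeasureTheory.ae μ).NeBot := by
        rw [MeasureTheory.ae_neBot]
        exact IsProbabilityMeasure.ne_zero μ
      obtain ⟨x, hxint, hxMs⟩ := (hae.and hMs).exists
      have hxR : ‖x‖ ≤ R := hstar x hxMs
      refine ((hxint.const_mul 2).add (integrable_const (8 * R ^ 2))).mono'
        (continuous_norm.pow 2).aestronglyMeasurable ?_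
      refine Filter.Eventually.of_forall fun z => ?_
      have h1 : ‖z‖ ≤ Metric.infDist (x + z) M + 2 * R := by
        have h2 := hlb (x + z)
        have h3 : ‖z‖ ≤ ‖x + z‖ + ‖x‖ := by
          have := norm_sub_le (x + z) x
          simpa using this
        linarith
      have h0 := Metric.infDist_nonneg (s := M) (x := x + z)
      have hz0 := norm_nonneg z
      rw [Real.norm_eq_abs, abs_of_nonneg (sq_nonneg ‖z‖)]
      simp only [Pi.add_apply, hmdef]
      nlinarith [sq_nonneg (Metric.infDist (x + z) M - 2 * R)]
    rw [hzero P inferInstance hP, hzero π inferInstance hπ]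
    simp only [sub_zero, abs_zero]
    positivity
end

section
/- Let (X_t)_{1≤t≤T} be an adapted process (with filtration F_t, F_0 trivial) taking values in a set M*, satisfying: there exist k ∈ ℕ and p_0 > 0 such that for all 0 ≤ t ≤ T − k, all h ∈ (0, h_0), and all x ∈ M*, (1/k)·Σ_{j=1}^k P(X_{t+j} ∈ B(x,h) | F_t) ≥ p_0 h^d. Then for any fixed x ∈ M* and h < h_0, P( Σ_{t=1}^T 1{X_t ∈ B(x,h)} < (p_0 h^d / 2)·⌊T/k⌋ ) ≤ exp(−(p_0 h^d / 12)·⌊T/k⌋). -/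
open MeasureTheory

theorem stmt11 {Ω : Type*} {m0 : MeasurableSpace Ω} (μ : Measure Ω) [IsProbabilityMeasure μ]
    {D d : ℕ} (Mstar : Set (EuclideanSpace ℝ (Fin D)))
    (ℱ : Filtration ℕ m0) (htriv : ℱ 0 = ⊥)
    (X : ℕ → Ω → EuclideanSpace ℝ (Fin D))
    (hadapted : Adapted ℱ X) (hval : ∀ t ω, X t ω ∈ Mstar)
    (T k : ℕ) (hk : 0 < k) (p0 h0 : ℝ) (hp0 : 0 < p0)
    (hsmallball : ∀ t, t + k ≤ T → ∀ h : ℝ, 0 < h → h < h0 → ∀ x ∈ Mstar,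
      ∀ᵐ ω ∂μ, p0 * h ^ d ≤ (1 / (k : ℝ)) * ∑ j ∈ Finset.Icc 1 k,
        (μ[fun ω' => Set.indicator {ω'' | X (t + j) ω'' ∈ Metric.ball x h} (fun _ => (1 : ℝ)) ω' | ℱ t]) ω)
    (x : EuclideanSpace ℝ (Fin D)) (hx : x ∈ Mstar)
    (h : ℝ) (hh : 0 < h) (hh0 : h < h0) :
    (μ {ω | ∑ t ∈ Finset.Icc 1 T, Set.indicator {ω' | X t ω' ∈ Metric.ball x h} (fun _ => (1 : ℝ)) ω
        < p0 * h ^ d / 2 * ((T / k : ℕ) : ℝ)}).toReal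
      ≤ Real.exp (-(p0 * h ^ d / 12) * ((T / k : ℕ) : ℝ)) := by
  classical
  set ι : ℕ → Ω → ℝ := fun t => Set.indicator {ω' | X t ω' ∈ Metric.ball x h} (fun _ => (1 : ℝ))
    with hιdef
  show (μ {ω | ∑ t ∈ Finset.Icc 1 T, ι t ω < p0 * h ^ d / 2 * ((T / k : ℕ) : ℝ)}).toReal
      ≤ Real.exp (-(p0 * h ^ d / 12) * ((T / k : ℕ) : ℝ))
  set p : ℝ := p0 * h ^ d with hpdef
  have hp : 0 < p := by positivity
  set m : ℕ := T / k with hmdef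
  rcases Nat.eq_zero_or_pos m with hm0 | hm1
  · rw [hm0]
    simp only [Nat.cast_zero, mul_zero, Real.exp_zero]
    calc (μ _).toReal ≤ (1 : ENNReal).toReal :=
          ENNReal.toReal_mono ENNReal.one_ne_top prob_le_one
      _ = 1 := ENNReal.toReal_one
  -- main case
  have hmk : m * k ≤ T := Nat.div_mul_le_self T k
  have hkR : (0:ℝ) < (k:ℝ) := by exact_mod_cast hk
  -- basic measurability
  have hBmeasF : ∀ t : ℕ, MeasurableSet[ℱ t] {ω | X t ω ∈ Metric.ball x h} :=
    fun t => (hadapted t) measurableSet_ball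
  have hBmeas : ∀ t : ℕ, MeasurableSet {ω | X t ω ∈ Metric.ball x h} :=
    fun t => ℱ.le t _ (hBmeasF t)
  have hιmeas : ∀ t, Measurable (ι t) := fun t => measurable_const.indicator (hBmeas t)
  have hιnonneg : ∀ t ω, 0 ≤ ι t ω := fun t ω =>
    Set.indicator_nonneg (fun _ _ => zero_le_one) ω
  have hιle : ∀ t ω, ι t ω ≤ 1 := by
    intro t ω
    by_cases hw : ω ∈ {ω' | X t ω' ∈ Metric.ball x h}
    · exact le_of_eq (Set.indicator_of_mem hw _)
    · rw [show ι t ω = 0 from Set.indicator_of_notMem hw _]; exact zero_le_one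
  -- blocks
  set A : ℕ → Set Ω := fun j => ⋃ i ∈ Finset.Icc 1 k, {ω | X (j * k + i) ω ∈ Metric.ball x h}
    with hAdef
  have hAmeasF : ∀ j, MeasurableSet[ℱ (j * k + k)] (A j) := by
    intro j
    refine Finset.measurableSet_biUnion _ (fun i hi => ?_)
    refine ℱ.mono ?_ _ (hBmeasF (j * k + i))
    exact Nat.add_le_add_left (Finset.mem_Icc.mp hi).2 _
  have hAmeas : ∀ j, MeasurableSet (A j) := fun j => ℱ.le _ _ (hAmeasF j)
  set ξ : ℕ → Ω → ℝ := fun j => (A j).indicator (fun _ => (1 : ℝ)) with hξdef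
  have hξmeasF : ∀ j, Measurable[ℱ (j * k + k)] (ξ j) := fun j =>
    measurable_const.indicator (hAmeasF j)
  have hξmeas : ∀ j, Measurable (ξ j) := fun j => measurable_const.indicator (hAmeas j)
  have hξnonneg : ∀ j ω, 0 ≤ ξ j ω := fun j ω =>
    Set.indicator_nonneg (fun _ _ => zero_le_one) ω
  have hξle : ∀ j ω, ξ j ω ≤ 1 := by
    intro j ω
    by_cases hw : ω ∈ A j
    · exact le_of_eq (Set.indicator_of_mem hw _)
    · rw [show ξ j ω = 0 from Set.indicator_of_notMem hw _]; exact zero_le_one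
  -- boundedness → integrability
  have hint : ∀ f : Ω → ℝ, Measurable f → (∀ ω, 0 ≤ f ω) → (∀ ω, f ω ≤ 1) → Integrable f μ := by
    intro f hf h0 h1
    refine ⟨hf.aestronglyMeasurable, HasFiniteIntegral.of_bounded (C := 1)
      (Filter.Eventually.of_forall fun ω => ?_)⟩
    rw [Real.norm_eq_abs, abs_le]
    exact ⟨by linarith [h0 ω], h1 ω⟩
  have hξint : ∀ j, Integrable (ξ j) μ := fun j =>
    hint _ (hξmeas j) (hξnonneg j) (hξle j)
  have hιint : ∀ t, Integrable (ι t) μ := fun t =>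
    hint _ (hιmeas t) (hιnonneg t) (hιle t)
  -- key conditional lower bound on ξ j
  have hcond_xi : ∀ j, j < m → ∀ᵐ ω ∂μ, p ≤ (μ[ξ j | ℱ (j * k)]) ω := by
    intro j hj
    have hjk : j * k + k ≤ T := by
      calc j * k + k = (j + 1) * k := (Nat.succ_mul j k).symm
        _ ≤ m * k := Nat.mul_le_mul_right k (Nat.succ_le_of_lt hj)
        _ ≤ T := hmk
    have h1 : ∀ᵐ ω ∂μ, p ≤ (1 / (k : ℝ)) *
        ∑ i ∈ Finset.Icc 1 k, (μ[ι (j * k + i) | ℱ (j * k)]) ω :=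
      hsmallball (j * k) hjk h hh hh0 x hx
    have h2 : ∀ i ∈ Finset.Icc 1 k,
        (μ[ι (j * k + i) | ℱ (j * k)]) ≤ᵐ[μ] (μ[ξ j | ℱ (j * k)]) := by
      intro i hi
      refine condExp_mono (hιint _) (hξint j) (Filter.Eventually.of_forall fun ω => ?_)
      by_cases hw : ω ∈ {ω' | X (j * k + i) ω' ∈ Metric.ball x h}
      · have hwA : ω ∈ A j := Set.mem_biUnion hi hw
        rw [show ι (j * k + i) ω = 1 from Set.indicator_of_mem hw _,
          show ξ j ω = 1 from Set.indicator_of_mem hwA _]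
      · rw [show ι (j * k + i) ω = 0 from Set.indicator_of_notMem hw _]
        exact hξnonneg j ω
    have h3 : ∀ᵐ ω ∂μ, ∀ i ∈ (Finset.Icc 1 k : Finset ℕ),
        (μ[ι (j * k + i) | ℱ (j * k)]) ω ≤ (μ[ξ j | ℱ (j * k)]) ω := by
      rw [Filter.eventually_all_finset]
      exact fun i hi => h2 i hi
    filter_upwards [h1, h3] with ω h1ω h3ω
    have hsum : ∑ i ∈ Finset.Icc 1 k, (μ[ι (j * k + i) | ℱ (j * k)]) ω
        ≤ ∑ _i ∈ Finset.Icc 1 k, (μ[ξ j | ℱ (j * k)]) ω :=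
      Finset.sum_le_sum h3ω
    have hcard : ∑ _i ∈ Finset.Icc 1 k, (μ[ξ j | ℱ (j * k)]) ω
        = (k : ℝ) * (μ[ξ j | ℱ (j * k)]) ω := by
      rw [Finset.sum_const, Nat.card_Icc]
      simp [nsmul_eq_mul]
    calc p ≤ (1 / (k : ℝ)) * ∑ i ∈ Finset.Icc 1 k, (μ[ι (j * k + i) | ℱ (j * k)]) ω := h1ω
      _ ≤ (1 / (k : ℝ)) * ((k : ℝ) * (μ[ξ j | ℱ (j * k)]) ω) := by
          rw [← hcard]
          exact mul_le_mul_of_nonneg_left hsum (by positivity)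
      _ = (μ[ξ j | ℱ (j * k)]) ω := by field_simp
  -- p ≤ 1
  have hple : p ≤ 1 := by
    have h1 := hcond_xi 0 hm1
    have h2 : (μ[ξ 0 | ℱ (0 * k)]) ≤ᵐ[μ] (μ[(fun _ : Ω => (1 : ℝ)) | ℱ (0 * k)]) :=
      condExp_mono (hξint 0) (integrable_const 1)
        (Filter.Eventually.of_forall fun ω => hξle 0 ω)
    have hconst : (μ[(fun _ : Ω => (1 : ℝ)) | ℱ (0 * k)]) = fun _ => (1 : ℝ) :=
      condExp_const (ℱ.le _) 1
    have : (Filter.NeBot (ae μ)) := ae_neBot.2 (IsProbabilityMeasure.ne_zero μ)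
    obtain ⟨ω, hω1, hω2⟩ := (h1.and h2).exists
    rw [hconst] at hω2
    exact le_trans hω1 hω2
  -- the multiplicative weights
  set g : ℕ → Ω → ℝ := fun j ω => 1 - 2⁻¹ * ξ j ω with hgdef
  have hgmeasF : ∀ j, Measurable[ℱ (j * k + k)] (g j) := fun j =>
    measurable_const.sub ((hξmeasF j).const_mul 2⁻¹)
  have hgmeas : ∀ j, Measurable (g j) := fun j =>
    measurable_const.sub ((hξmeas j).const_mul 2⁻¹)
  have hgnonneg : ∀ j ω, 0 ≤ g j ω := by
    intro j ω; have := hξle j ω; simp only [hgdef]; linarith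
  have hgle : ∀ j ω, g j ω ≤ 1 := by
    intro j ω; have := hξnonneg j ω; simp only [hgdef]; linarith
  have hgint : ∀ j, Integrable (g j) μ := fun j =>
    hint _ (hgmeas j) (hgnonneg j) (hgle j)
  -- conditional bound on g
  have hcond_g : ∀ j, j < m → ∀ᵐ ω ∂μ, (μ[g j | ℱ (j * k)]) ω ≤ 1 - p / 2 := by
    intro j hj
    have hgrew : g j = (fun _ : Ω => (1 : ℝ)) - (2⁻¹ : ℝ) • ξ j := by
      funext ω
      simp [hgdef, Pi.sub_apply, Pi.smul_apply, smul_eq_mul]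
    have h1 : μ[g j | ℱ (j * k)] =ᵐ[μ]
        μ[(fun _ : Ω => (1 : ℝ)) | ℱ (j * k)] - μ[(2⁻¹ : ℝ) • ξ j | ℱ (j * k)] := by
      rw [hgrew]
      exact condExp_sub (integrable_const 1) ((hξint j).smul (2⁻¹ : ℝ)) _
    have h2 : μ[(2⁻¹ : ℝ) • ξ j | ℱ (j * k)] =ᵐ[μ] (2⁻¹ : ℝ) • μ[ξ j | ℱ (j * k)] :=
      condExp_smul (2⁻¹ : ℝ) (ξ j) _
    have hconst : (μ[(fun _ : Ω => (1 : ℝ)) | ℱ (j * k)]) = fun _ => (1 : ℝ) :=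
      condExp_const (ℱ.le _) 1
    filter_upwards [h1, h2, hcond_xi j hj] with ω e1 e2 e3
    rw [e1, Pi.sub_apply, hconst, e2, Pi.smul_apply, smul_eq_mul]
    linarith
  -- the product supermartingale
  set Y : ℕ → Ω → ℝ := fun n ω => ∏ j ∈ Finset.range n, g j ω with hYdef
  have hYmeasF : ∀ n, Measurable[ℱ (n * k)] (Y n) := by
    intro n
    refine Finset.measurable_prod _ (fun j hj => ?_)
    refine (hgmeasF j).mono (ℱ.mono ?_) le_rfl
    calc j * k + k = (j + 1) * k := (Nat.succ_mul j k).symm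
      _ ≤ n * k := Nat.mul_le_mul_right k (Nat.succ_le_of_lt (Finset.mem_range.mp hj))
  have hYmeas : ∀ n, Measurable (Y n) := fun n => (hYmeasF n).mono (ℱ.le _) le_rfl
  have hYnonneg : ∀ n ω, 0 ≤ Y n ω := fun n ω =>
    Finset.prod_nonneg fun j _ => hgnonneg j ω
  have hYle : ∀ n ω, Y n ω ≤ 1 := fun n ω =>
    Finset.prod_le_one (fun j _ => hgnonneg j ω) (fun j _ => hgle j ω)
  have hYint : ∀ n, Integrable (Y n) μ := fun n =>
    hint _ (hYmeas n) (hYnonneg n) (hYle n)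
  have h1mp : (0:ℝ) ≤ 1 - p / 2 := by linarith
  -- Chernoff induction
  have hkey : ∀ n, n ≤ m → ∫ ω, Y n ω ∂μ ≤ (1 - p / 2) ^ n := by
    intro n
    induction n with
    | zero =>
      intro _
      simp [hYdef]
    | succ n ih =>
      intro hn
      have hn' : n < m := lt_of_lt_of_le (Nat.lt_succ_self n) hn
      have hYg_int : Integrable (Y n * g n) μ := by
        refine hint _ ((hYmeas n).mul (hgmeas n)) (fun ω => ?_) (fun ω => ?_)
        · exact mul_nonneg (hYnonneg n ω) (hgnonneg n ω)
        · calc Y n ω * g n ω ≤ 1 * 1 :=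
              mul_le_mul (hYle n ω) (hgle n ω) (hgnonneg n ω) zero_le_one
            _ = 1 := mul_one 1
      have hpull : μ[Y n * g n | ℱ (n * k)] =ᵐ[μ] Y n * μ[g n | ℱ (n * k)] :=
        condExp_mul_of_stronglyMeasurable_left (hYmeasF n).stronglyMeasurable hYg_int (hgint n)
      have step1 : ∫ ω, Y (n + 1) ω ∂μ = ∫ ω, (Y n * g n) ω ∂μ := by
        refine integral_congr_ae (Filter.Eventually.of_forall fun ω => ?_)
        simp [hYdef, Finset.prod_range_succ]
      have step2 : ∫ ω, (Y n * g n) ω ∂μ = ∫ ω, (μ[Y n * g n | ℱ (n * k)]) ω ∂μ :=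
        (integral_condExp (ℱ.le _)).symm
      have step3 : ∫ ω, (μ[Y n * g n | ℱ (n * k)]) ω ∂μ
          = ∫ ω, (Y n * μ[g n | ℱ (n * k)]) ω ∂μ := integral_congr_ae hpull
      have step4 : ∫ ω, (Y n * μ[g n | ℱ (n * k)]) ω ∂μ
          ≤ ∫ ω, Y n ω * (1 - p / 2) ∂μ := by
        refine integral_mono_ae (integrable_condExp.congr hpull) ((hYint n).mul_const _) ?_
        filter_upwards [hcond_g n hn'] with ω hω
        exact mul_le_mul_of_nonneg_left hω (hYnonneg n ω)
      have step5 : ∫ ω, Y n ω * (1 - p / 2) ∂μ = (∫ ω, Y n ω ∂μ) * (1 - p / 2) :=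
        integral_mul_const _ _
      calc ∫ ω, Y (n + 1) ω ∂μ ≤ (∫ ω, Y n ω ∂μ) * (1 - p / 2) := by
            rw [step1, step2, step3, step5.symm] at *
            exact step4
        _ ≤ (1 - p / 2) ^ n * (1 - p / 2) :=
            mul_le_mul_of_nonneg_right (ih (le_of_lt hn')) h1mp
        _ = (1 - p / 2) ^ (n + 1) := (pow_succ _ n).symm
  -- sum comparison : block sums vs full sum
  have hxi_le_blocksum : ∀ j ω, ξ j ω ≤ ∑ i ∈ Finset.Icc 1 k, ι (j * k + i) ω := by
    intro j ω
    by_cases hw : ω ∈ A j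
    · obtain ⟨i, hi, hmem⟩ := Set.mem_iUnion₂.mp hw
      have h1 : ι (j * k + i) ω = 1 := Set.indicator_of_mem hmem _
      have h2 : ξ j ω = 1 := Set.indicator_of_mem hw _
      rw [h2, ← h1]
      exact Finset.single_le_sum (fun t _ => hιnonneg _ ω) hi
    · rw [show ξ j ω = 0 from Set.indicator_of_notMem hw _]
      exact Finset.sum_nonneg fun t _ => hιnonneg _ ω
  have hblock : ∀ n ω, ∑ j ∈ Finset.range n, ∑ i ∈ Finset.Icc 1 k, ι (j * k + i) ω
      = ∑ t ∈ Finset.Ioc 0 (n * k), ι t ω := by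
    intro n ω
    induction n with
    | zero => simp
    | succ n ih =>
      rw [Finset.sum_range_succ, ih]
      have h1 : ∑ i ∈ Finset.Icc 1 k, ι (n * k + i) ω
          = ∑ t ∈ Finset.Ioc (n * k) (n * k + k), ι t ω := by
        rw [show Finset.Icc 1 k = Finset.Ioc 0 k from Finset.Icc_add_one_left_eq_Ioc 0 k]
        rw [show Finset.Ioc (n * k) (n * k + k)
            = (Finset.Ioc 0 k).map (addLeftEmbedding (n * k)) by
          rw [Finset.map_add_left_Ioc]; simp]
        rw [Finset.sum_map]
        rfl
      rw [h1, Finset.sum_Ioc_consecutive _ (Nat.zero_le _) (Nat.le_add_right _ k)]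
      congr 1
      rw [Nat.succ_mul]
  have hsum_le : ∀ ω, ∑ j ∈ Finset.range m, ξ j ω ≤ ∑ t ∈ Finset.Icc 1 T, ι t ω := by
    intro ω
    calc ∑ j ∈ Finset.range m, ξ j ω
        ≤ ∑ j ∈ Finset.range m, ∑ i ∈ Finset.Icc 1 k, ι (j * k + i) ω :=
          Finset.sum_le_sum fun j _ => hxi_le_blocksum j ω
      _ = ∑ t ∈ Finset.Ioc 0 (m * k), ι t ω := hblock m ω
      _ ≤ ∑ t ∈ Finset.Ioc 0 T, ι t ω := by
          rw [← Finset.sum_Ioc_consecutive (fun t => ι t ω) (Nat.zero_le (m * k)) hmk]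
          exact le_add_of_nonneg_right (Finset.sum_nonneg fun t _ => hιnonneg t ω)
      _ = ∑ t ∈ Finset.Icc 1 T, ι t ω := by rw [show Finset.Icc 1 T = Finset.Ioc 0 T from Finset.Icc_add_one_left_eq_Ioc 0 T]
  -- value of Y m
  have hYval : ∀ ω, Y m ω
      = (1 / 2 : ℝ) ^ ((Finset.range m).filter (fun j => ω ∈ A j)).card := by
    intro ω
    have hgval : ∀ j, g j ω = if ω ∈ A j then (1 / 2 : ℝ) else 1 := by
      intro j
      by_cases hw : ω ∈ A j
      · rw [if_pos hw]
        simp only [hgdef, hξdef, Set.indicator_of_mem hw]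
        norm_num
      · rw [if_neg hw]
        simp only [hgdef, hξdef, Set.indicator_of_notMem hw]
        norm_num
    simp only [hYdef]
    calc ∏ j ∈ Finset.range m, g j ω
        = ∏ j ∈ Finset.range m, (if ω ∈ A j then (1 / 2 : ℝ) else 1) :=
          Finset.prod_congr rfl fun j _ => hgval j
      _ = (∏ j ∈ (Finset.range m).filter (fun j => ω ∈ A j), (1 / 2 : ℝ))
          * ∏ j ∈ (Finset.range m).filter (fun j => ¬ ω ∈ A j), (1 : ℝ) :=
          Finset.prod_ite _ _
      _ = (1 / 2 : ℝ) ^ ((Finset.range m).filter (fun j => ω ∈ A j)).card := by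
          rw [Finset.prod_const, Finset.prod_const_one, mul_one]
  have hSval : ∀ ω, ∑ j ∈ Finset.range m, ξ j ω
      = (((Finset.range m).filter (fun j => ω ∈ A j)).card : ℝ) := by
    intro ω
    simp only [hξdef, Set.indicator_apply]
    rw [Finset.sum_boole]
  -- Markov
  set E : Set Ω := {ω | ∑ t ∈ Finset.Icc 1 T, ι t ω < p / 2 * (m : ℝ)} with hEdef
  have hEmeas : MeasurableSet E :=
    measurableSet_lt (Finset.measurable_sum _ fun t _ => hιmeas t) measurable_const
  have hpow_exp : ∀ N : ℕ, ((1 : ℝ) / 2) ^ N = Real.exp (-(Real.log 2) * N) := by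
    intro N
    rw [neg_mul, Real.exp_neg, mul_comm, Real.exp_nat_mul, Real.exp_log two_pos]
    rw [one_div, inv_pow]
  have hEbound : ∀ ω ∈ E, Real.exp (-(Real.log 2) * (p / 2 * (m : ℝ))) ≤ Y m ω := by
    intro ω hω
    have hN : ((((Finset.range m).filter (fun j => ω ∈ A j)).card : ℝ)) ≤ p / 2 * (m : ℝ) := by
      rw [← hSval ω]
      exact le_of_lt (lt_of_le_of_lt (hsum_le ω) hω)
    rw [hYval ω, hpow_exp]
    apply Real.exp_le_exp.mpr
    have hlog : (0:ℝ) ≤ Real.log 2 := Real.log_nonneg one_le_two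
    nlinarith
  have hmarkov : Real.exp (-(Real.log 2) * (p / 2 * (m : ℝ))) * (μ E).toReal
      ≤ (1 - p / 2) ^ m := by
    calc Real.exp (-(Real.log 2) * (p / 2 * (m : ℝ))) * (μ E).toReal
        = ∫ _ω in E, Real.exp (-(Real.log 2) * (p / 2 * (m : ℝ))) ∂μ := by
          rw [setIntegral_const, smul_eq_mul, mul_comm]; rfl
      _ ≤ ∫ ω in E, Y m ω ∂μ := by
          refine setIntegral_mono_on (integrableOn_const (measure_ne_top μ E))
            ((hYint m).integrableOn) hEmeas hEbound
      _ ≤ ∫ ω, Y m ω ∂μ :=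
          setIntegral_le_integral (hYint m) (Filter.Eventually.of_forall (hYnonneg m))
      _ ≤ (1 - p / 2) ^ m := hkey m le_rfl
  -- final computations
  have hpow : (1 - p / 2) ^ m ≤ Real.exp (-(p / 2) * (m : ℝ)) := by
    calc (1 - p / 2) ^ m ≤ Real.exp (-(p / 2)) ^ m := by
          refine pow_le_pow_left₀ h1mp ?_ m
          have := Real.add_one_le_exp (-(p / 2))
          linarith
      _ = Real.exp (-(p / 2) * (m : ℝ)) := by
          rw [← Real.exp_nat_mul, mul_comm]
  have hexp_pos : (0:ℝ) < Real.exp (-(Real.log 2) * (p / 2 * (m : ℝ))) := Real.exp_pos _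
  have hfinal : (μ E).toReal ≤ Real.exp (-(p / 12) * (m : ℝ)) := by
    have h1 : (μ E).toReal
        ≤ Real.exp (-(p / 2) * (m : ℝ)) / Real.exp (-(Real.log 2) * (p / 2 * (m : ℝ))) := by
      rw [le_div_iff₀ hexp_pos, mul_comm]
      exact le_trans hmarkov hpow
    rw [← Real.exp_sub] at h1
    refine le_trans h1 (Real.exp_le_exp.mpr ?_)
    have hlog : Real.log 2 < 0.6931471808 := Real.log_two_lt_d9
    have hpm : (0:ℝ) ≤ p * (m : ℝ) := mul_nonneg hp.le (Nat.cast_nonneg m)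
    nlinarith
  exact hfinal
end

section
/- Let (ξ_j)_{1≤j≤n} be {0,1}-valued random variables adapted to a filtration (G_j) with E(ξ_j | G_{j−1}) ≥ p almost surely for some p ∈ (0,1). Then P( Σ_{j=1}^n ξ_j < np/2 ) ≤ exp(−np/12). -/
open MeasureTheory

theorem stmt12 {Ω : Type*} {m0 : MeasurableSpace Ω} (μ : Measure Ω) [IsProbabilityMeasure μ]
    (G : Filtration ℕ m0) (ξ : ℕ → Ω → ℝ) (hadapted : Adapted G ξ)
    (h01 : ∀ j ω, ξ j ω = 0 ∨ ξ j ω = 1)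
    (n : ℕ) (p : ℝ) (hp0 : 0 < p) (hp1 : p < 1)
    (hcond : ∀ j, 1 ≤ j → j ≤ n → ∀ᵐ ω ∂μ, p ≤ (μ[ξ j | G (j - 1)]) ω) :
    (μ {ω | ∑ j ∈ Finset.Icc 1 n, ξ j ω < (n : ℝ) * p / 2}).toReal
      ≤ Real.exp (-((n : ℝ) * p / 12)) := by
  -- basic bounds on ξ
  have hξ0 : ∀ j ω, 0 ≤ ξ j ω := fun j ω => by rcases h01 j ω with h | h <;> simp [h]
  have hξ1 : ∀ j ω, ξ j ω ≤ 1 := fun j ω => by rcases h01 j ω with h | h <;> simp [h]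
  have hξmeas : ∀ j, StronglyMeasurable (ξ j) := fun j => ((hadapted j).mono (G.le j) le_rfl).stronglyMeasurable
  have hξint : ∀ j, Integrable (ξ j) μ := by
    intro j
    refine ⟨(hξmeas j).aestronglyMeasurable, HasFiniteIntegral.of_bounded (C := 1) ?_⟩
    filter_upwards with ω
    rw [Real.norm_eq_abs, abs_of_nonneg (hξ0 j ω)]; exact hξ1 j ω
  -- the multiplicative supermartingale
  set f : ℕ → Ω → ℝ := fun k ω => ∏ j ∈ Finset.Icc 1 k, (1 - ξ j ω / 2) with hf
  have hfac0 : ∀ j ω, 0 ≤ 1 - ξ j ω / 2 := fun j ω => by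
    have := hξ1 j ω; linarith
  have hfac1 : ∀ j ω, 1 - ξ j ω / 2 ≤ 1 := fun j ω => by
    have := hξ0 j ω; linarith
  have hf0 : ∀ k ω, 0 ≤ f k ω := fun k ω =>
    Finset.prod_nonneg fun j _ => hfac0 j ω
  have hf1 : ∀ k ω, f k ω ≤ 1 := fun k ω =>
    Finset.prod_le_one (fun j _ => hfac0 j ω) (fun j _ => hfac1 j ω)
  have hfmeas : ∀ k, StronglyMeasurable[G k] (f k) := by
    intro k
    apply Finset.stronglyMeasurable_fun_prod
    intro j hj
    have hjk : j ≤ k := (Finset.mem_Icc.mp hj).2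
    have hx : StronglyMeasurable[G k] (fun ω => 1 - ξ j ω / 2) := by
      simp only [div_eq_mul_inv]
      exact stronglyMeasurable_const.sub
        ((((hadapted j).mono (G.mono hjk) le_rfl).stronglyMeasurable).mul stronglyMeasurable_const)
    exact hx
  have hfmeas0 : ∀ k, StronglyMeasurable (f k) := fun k => (hfmeas k).mono (G.le k)
  have hfint : ∀ k, Integrable (f k) μ := by
    intro k
    refine ⟨(hfmeas0 k).aestronglyMeasurable, HasFiniteIntegral.of_bounded (C := 1) ?_⟩
    filter_upwards with ω
    rw [Real.norm_eq_abs, abs_of_nonneg (hf0 k ω)]; exact hf1 k ω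
  -- key recursion bound
  have key : ∀ k, k ≤ n → ∫ ω, f k ω ∂μ ≤ (1 - p / 2) ^ k := by
    intro k
    induction k with
    | zero =>
      intro _
      simp [hf]
    | succ k ih =>
      intro hkn
      have hk : k ≤ n := Nat.le_of_succ_le hkn
      have hsplit : ∀ ω, f (k + 1) ω = f k ω * (1 - ξ (k + 1) ω / 2) := by
        intro ω
        rw [hf]
        exact Finset.prod_Icc_succ_top (Nat.le_add_left 1 k) _
      -- integrability of f k * ξ (k+1)
      have hint_mul : Integrable (f k * ξ (k + 1)) μ := by
        refine (hξint (k + 1)).bdd_mul (hfmeas0 k).aestronglyMeasurable (c := 1) (Filter.Eventually.of_forall ?_)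
        intro ω
        rw [Real.norm_eq_abs, abs_of_nonneg (hf0 k ω)]; exact hf1 k ω
      -- pull-out property
      have hpull := condExp_mul_of_stronglyMeasurable_left (μ := μ) (hfmeas k) hint_mul (hξint (k + 1))
      have hGk : G k ≤ m0 := G.le k
      have hint_mul2 : Integrable (fun ω => f k ω * (μ[ξ (k + 1) | G k]) ω) μ := by
        refine (integrable_condExp).bdd_mul (hfmeas0 k).aestronglyMeasurable (c := 1) (Filter.Eventually.of_forall ?_)
        intro ω
        rw [Real.norm_eq_abs, abs_of_nonneg (hf0 k ω)]; exact hf1 k ω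
      have heq1 : ∫ ω, f k ω * ξ (k + 1) ω ∂μ
          = ∫ ω, f k ω * (μ[ξ (k + 1) | G k]) ω ∂μ := by
        calc ∫ ω, f k ω * ξ (k + 1) ω ∂μ = ∫ ω, (μ[f k * ξ (k + 1) | G k]) ω ∂μ :=
              (integral_condExp hGk).symm
          _ = ∫ ω, f k ω * (μ[ξ (k + 1) | G k]) ω ∂μ := integral_congr_ae hpull
      -- lower bound for ∫ f k * ξ (k+1)
      have hcond' := hcond (k + 1) (Nat.le_add_left 1 k) hkn
      simp only [Nat.add_sub_cancel] at hcond'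
      have hge : p * ∫ ω, f k ω ∂μ ≤ ∫ ω, f k ω * ξ (k + 1) ω ∂μ := by
        rw [heq1, ← integral_const_mul]
        refine integral_mono_ae ((hfint k).const_mul p) hint_mul2 ?_
        filter_upwards [hcond'] with ω hω
        calc p * f k ω = f k ω * p := mul_comm _ _
          _ ≤ f k ω * (μ[ξ (k + 1) | G k]) ω := mul_le_mul_of_nonneg_left hω (hf0 k ω)
      -- combine
      have hIk0 : 0 ≤ ∫ ω, f k ω ∂μ := integral_nonneg fun ω => hf0 k ω
      have hstep : ∫ ω, f (k + 1) ω ∂μ ≤ (1 - p / 2) * ∫ ω, f k ω ∂μ := by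
        have : ∫ ω, f (k + 1) ω ∂μ
            = ∫ ω, f k ω ∂μ - (1 / 2) * ∫ ω, f k ω * ξ (k + 1) ω ∂μ := by
          rw [← integral_const_mul, ← integral_sub (hfint k) (by
            simpa using hint_mul.const_mul (1 / 2))]
          refine integral_congr_ae (Filter.Eventually.of_forall fun ω => ?_)
          rw [hsplit ω]; ring
        rw [this]
        nlinarith [hge, hIk0]
      calc ∫ ω, f (k + 1) ω ∂μ ≤ (1 - p / 2) * ∫ ω, f k ω ∂μ := hstep
        _ ≤ (1 - p / 2) * (1 - p / 2) ^ k := by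
            refine mul_le_mul_of_nonneg_left (ih hk) ?_; linarith
        _ = (1 - p / 2) ^ (k + 1) := (pow_succ' _ _).symm
  -- f n ω = exp(-(log 2) * ∑ ξ)
  have hfexp : ∀ ω, f n ω = Real.exp (-(Real.log 2) * ∑ j ∈ Finset.Icc 1 n, ξ j ω) := by
    intro ω
    rw [Finset.mul_sum, Real.exp_sum]
    refine Finset.prod_congr rfl fun j _ => ?_
    rcases h01 j ω with h | h
    · simp [h]
    · rw [h]
      rw [mul_one, Real.exp_neg, Real.exp_log two_pos]
      norm_num
  -- Markov
  set ε : ℝ := Real.exp (-(Real.log 2) * ((n : ℝ) * p / 2)) with hε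
  have hεpos : 0 < ε := Real.exp_pos _
  have hsub : {ω | ∑ j ∈ Finset.Icc 1 n, ξ j ω < (n : ℝ) * p / 2} ⊆ {ω | ε ≤ f n ω} := by
    intro ω hω
    simp only [Set.mem_setOf_eq] at hω ⊢
    rw [hfexp ω, hε]
    apply Real.exp_le_exp.mpr
    have hlog2 : 0 < Real.log 2 := Real.log_pos one_lt_two
    nlinarith
  have hmarkov := mul_meas_ge_le_integral_of_nonneg
    (Filter.Eventually.of_forall fun ω => hf0 n ω) (hfint n) ε
  have hmono : (μ {ω | ∑ j ∈ Finset.Icc 1 n, ξ j ω < (n : ℝ) * p / 2}).toReal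
      ≤ (μ {ω | ε ≤ f n ω}).toReal :=
    ENNReal.toReal_mono (measure_ne_top _ _) (measure_mono hsub)
  have hbound : (μ {ω | ∑ j ∈ Finset.Icc 1 n, ξ j ω < (n : ℝ) * p / 2}).toReal
      ≤ (1 - p / 2) ^ n / ε := by
    rw [le_div_iff₀ hεpos]
    calc (μ {ω | ∑ j ∈ Finset.Icc 1 n, ξ j ω < (n : ℝ) * p / 2}).toReal * ε
        ≤ (μ {ω | ε ≤ f n ω}).toReal * ε := by
          exact mul_le_mul_of_nonneg_right hmono hεpos.le
      _ = ε * (μ {ω | ε ≤ f n ω}).toReal := mul_comm _ _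
      _ ≤ ∫ ω, f n ω ∂μ := hmarkov
      _ ≤ (1 - p / 2) ^ n := key n le_rfl
  refine hbound.trans ?_
  -- final numeric bound
  have hn0 : (0 : ℝ) ≤ (n : ℝ) * p := mul_nonneg (Nat.cast_nonneg n) hp0.le
  have h1 : (1 - p / 2) ^ n ≤ Real.exp (-((n : ℝ) * p / 2)) := by
    calc (1 - p / 2) ^ n ≤ Real.exp (-(p / 2)) ^ n := by
          apply pow_le_pow_left₀ (by linarith)
          have := Real.add_one_le_exp (-(p / 2)); linarith
      _ = Real.exp (-(p / 2) * n) := by rw [← Real.exp_nat_mul]; ring_nf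
      _ = Real.exp (-((n : ℝ) * p / 2)) := by ring_nf
  have hl : Real.log 2 ≤ 5 / 6 := by
    have := Real.log_two_lt_d9; linarith
  calc (1 - p / 2) ^ n / ε ≤ Real.exp (-((n : ℝ) * p / 2)) / ε := by gcongr
    _ = Real.exp (-((n : ℝ) * p / 2) - -(Real.log 2) * ((n : ℝ) * p / 2)) := by
        rw [hε, ← Real.exp_sub]
    _ ≤ Real.exp (-((n : ℝ) * p / 12)) := by
        apply Real.exp_le_exp.mpr
        nlinarith [mul_le_mul_of_nonneg_right hl (by positivity : (0:ℝ) ≤ (n : ℝ) * p / 2)]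
end
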